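/- arXiv:math/0308162 — 4 statements merged into one kernel-verified Lean document; each statement's English description precedes it below -/
import Mathlib

section
/- If X is a compact connected Hausdorff space (a continuum) that is chainable (every finite open cover has a finite open refinement C_1,...,C_m such that C_i ∩ C_j ≠ ∅ iff |i-j| ≤ 1), then X has surjective semi-span zero: every subcontinuum Z of X × X with π₂[Z] ⊆ π₁[Z] = X must intersect the diagonal Δ(X). -/
open Set

/-- If a continuum `X` is chainable (every finite open cover has a finite open chain-cover
refinement), then `X` has surjective semi-span zero: every subcontinuum `Z` of `X × X`
with `π₂[Z] ⊆ π₁[Z] = X` meets the diagonal. -/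
theorem stmt0 {X : Type*} [TopologicalSpace X] [CompactSpace X] [T2Space X]
    [ConnectedSpace X] [Nonempty X]
    (chainable : ∀ (ι : Type) (_ : Finite ι) (U : ι → Set X), (∀ i, IsOpen (U i)) →
      (⋃ i, U i) = univ →
      ∃ (m : ℕ) (C : Fin m → Set X), (∀ i, IsOpen (C i)) ∧ (⋃ i, C i) = univ ∧
        (∀ i, ∃ j, C i ⊆ U j) ∧
        (∀ i j : Fin m, (C i ∩ C j).Nonempty ↔ |(i : ℤ) - (j : ℤ)| ≤ 1))
    (Z : Set (X × X)) (hZne : Z.Nonempty) (hZcomp : IsCompact Z) (hZconn : IsConnected Z)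
    (hsub : Prod.snd '' Z ⊆ Prod.fst '' Z) (hsurj : Prod.fst '' Z = univ) :
    ∃ x : X, (x, x) ∈ Z := by
  by_contra hcon
  push_neg at hcon
  have hZcl : IsClosed Z := hZcomp.isClosed
  -- Step 1: around each point x pick an open W with (W × W) ∩ Z = ∅.
  have key : ∀ x : X, ∃ W : Set X, IsOpen W ∧ x ∈ W ∧
      ∀ z ∈ Z, ¬(z.1 ∈ W ∧ z.2 ∈ W) := by
    intro x
    have hx : Zᶜ ∈ nhds (x, x) := hZcl.isOpen_compl.mem_nhds (hcon x)
    rw [mem_nhds_prod_iff'] at hx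
    obtain ⟨u, v, hu, hxu, hv, hxv, huv⟩ := hx
    refine ⟨u ∩ v, hu.inter hv, ⟨hxu, hxv⟩, ?_⟩
    rintro z hz ⟨h1, h2⟩
    exact huv ⟨h1.1, h2.2⟩ hz
  choose W hWo hWx hWZ using key
  -- Step 2: finite subcover
  obtain ⟨t, ht⟩ := isCompact_univ.elim_finite_subcover W hWo
    (fun x _ => mem_iUnion.2 ⟨x, hWx x⟩)
  have hcard : Nonempty (t ≃ Fin t.card) := ⟨t.equivFin⟩
  obtain ⟨e⟩ := hcard
  -- Step 3: chain refinement
  have hunion : (⋃ i : Fin t.card, W ((e.symm i : t) : X)) = univ := by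
    apply eq_univ_of_univ_subset
    intro y hy
    obtain ⟨x, hx⟩ := mem_iUnion.1 (ht hy)
    obtain ⟨hxt, hyx⟩ := mem_iUnion.1 hx
    refine mem_iUnion.2 ⟨e ⟨x, hxt⟩, ?_⟩
    simpa using hyx
  obtain ⟨m, C, hCo, hCu, href, hchain⟩ := chainable (Fin t.card) inferInstance
    (fun i => W ((e.symm i : t) : X)) (fun i => hWo _) hunion
  -- basic facts about the chain
  have hm : 0 < m := by
    rcases Nat.eq_zero_or_pos m with h0 | h
    · exfalso
      obtain ⟨x⟩ := ‹Nonempty X›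
      have := hCu ▸ mem_univ x
      obtain ⟨i, _⟩ := mem_iUnion.1 this
      exact absurd i.2 (by omega)
    · exact h
  have hCne : ∀ k : Fin m, (C k).Nonempty := by
    intro k
    have := (hchain k k).2 (by simp)
    exact this.mono inter_subset_left
  have hkeyC : ∀ k : Fin m, ∀ z ∈ Z, ¬(z.1 ∈ C k ∧ z.2 ∈ C k) := by
    intro k z hz ⟨h1, h2⟩
    obtain ⟨j, hj⟩ := href k
    exact hWZ _ z hz ⟨hj h1, hj h2⟩
  have hadjC : ∀ (i j : Fin m) (x : X), x ∈ C i → x ∈ C j →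
      -1 ≤ (i : ℤ) - (j : ℤ) ∧ (i : ℤ) - (j : ℤ) ≤ 1 := by
    intro i j x h1 h2
    exact abs_le.1 ((hchain i j).1 ⟨x, h1, h2⟩)
  -- the two open pieces
  set U1 : Set (X × X) := ⋃ (i : Fin m) (j : Fin m) (_ : (i : ℕ) < (j : ℕ)), C i ×ˢ C j
    with hU1def
  set U2 : Set (X × X) := ⋃ (i : Fin m) (j : Fin m) (_ : (j : ℕ) < (i : ℕ)), C i ×ˢ C j
    with hU2def
  have hU1mem : ∀ z : X × X, z ∈ U1 ↔
      ∃ i j : Fin m, (i : ℕ) < (j : ℕ) ∧ z.1 ∈ C i ∧ z.2 ∈ C j := by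
    intro z
    simp only [hU1def, mem_iUnion, Set.mem_prod]
    tauto
  have hU2mem : ∀ z : X × X, z ∈ U2 ↔
      ∃ i j : Fin m, (j : ℕ) < (i : ℕ) ∧ z.1 ∈ C i ∧ z.2 ∈ C j := by
    intro z
    simp only [hU2def, mem_iUnion, Set.mem_prod]
    tauto
  have hU1o : IsOpen U1 := by
    refine isOpen_iUnion fun i => isOpen_iUnion fun j => isOpen_iUnion fun _ => ?_
    exact (hCo i).prod (hCo j)
  have hU2o : IsOpen U2 := by
    refine isOpen_iUnion fun i => isOpen_iUnion fun j => isOpen_iUnion fun _ => ?_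
    exact (hCo i).prod (hCo j)
  have hcover : Z ⊆ U1 ∪ U2 := by
    intro z hz
    obtain ⟨i, hi⟩ := mem_iUnion.1 (hCu ▸ mem_univ z.1)
    obtain ⟨j, hj⟩ := mem_iUnion.1 (hCu ▸ mem_univ z.2)
    have hne : (i : ℕ) ≠ (j : ℕ) := by
      intro h
      exact hkeyC j z hz ⟨(Fin.ext h : i = j) ▸ hi, hj⟩
    rcases Nat.lt_or_ge (i : ℕ) (j : ℕ) with h | h
    · exact Or.inl ((hU1mem z).2 ⟨i, j, h, hi, hj⟩)
    · exact Or.inr ((hU2mem z).2 ⟨i, j, by omega, hi, hj⟩)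
  -- Z meets at most one piece
  have hdisj : Z ∩ (U1 ∩ U2) = ∅ := by
    rw [eq_empty_iff_forall_notMem]
    rintro z ⟨hz, hz1, hz2⟩
    obtain ⟨i, j, hij, hi, hj⟩ := (hU1mem z).1 hz1
    obtain ⟨i', j', hij', hi', hj'⟩ := (hU2mem z).1 hz2
    obtain ⟨a1, a2⟩ := hadjC i i' z.1 hi hi'
    obtain ⟨b1, b2⟩ := hadjC j j' z.2 hj hj'
    -- i < j, j' < i', |i - i'| ≤ 1, |j - j'| ≤ 1  forces i' = j
    have : i' = j := by
      apply Fin.ext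
      omega
    exact hkeyC j z hz ⟨this ▸ hi', hj⟩
  -- endpoint arguments
  have hend1 : ¬ Z ⊆ U1 := by
    intro hsubU
    set k : Fin m := ⟨m - 1, by omega⟩ with hk
    obtain ⟨y, hy⟩ := hCne k
    have : y ∈ Prod.fst '' Z := hsurj ▸ mem_univ y
    obtain ⟨z, hzZ, hzy⟩ := this
    obtain ⟨i, j, hij, hi, hj⟩ := (hU1mem z).1 (hsubU hzZ)
    have hyk : z.1 ∈ C k := hzy ▸ hy
    obtain ⟨a1, a2⟩ := hadjC i k z.1 hi hyk
    have hkv : (k : ℕ) = m - 1 := rfl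
    have hjlt : (j : ℕ) < m := j.2
    have : j = k := by
      apply Fin.ext
      omega
    exact hkeyC k z hzZ ⟨hyk, this ▸ hj⟩
  have hend2 : ¬ Z ⊆ U2 := by
    intro hsubU
    set k : Fin m := ⟨0, hm⟩ with hk
    obtain ⟨y, hy⟩ := hCne k
    have : y ∈ Prod.fst '' Z := hsurj ▸ mem_univ y
    obtain ⟨z, hzZ, hzy⟩ := this
    obtain ⟨i, j, hij, hi, hj⟩ := (hU2mem z).1 (hsubU hzZ)
    have hyk : z.1 ∈ C k := hzy ▸ hy
    obtain ⟨a1, a2⟩ := hadjC i k z.1 hi hyk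
    have hkv : (k : ℕ) = 0 := rfl
    have : j = k := by
      apply Fin.ext
      omega
    exact hkeyC k z hzZ ⟨hyk, this ▸ hj⟩
  -- connectivity contradiction
  rcases (Z ∩ U1).eq_empty_or_nonempty with h1 | h1
  · apply hend2
    intro z hz
    rcases hcover hz with h | h
    · exact (eq_empty_iff_forall_notMem.1 h1 z ⟨hz, h⟩).elim
    · exact h
  rcases (Z ∩ U2).eq_empty_or_nonempty with h2 | h2
  · apply hend1
    intro z hz
    rcases hcover hz with h | h
    · exact h
    · exact (eq_empty_iff_forall_notMem.1 h2 z ⟨hz, h⟩).elim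
  have hne := hZconn.isPreconnected U1 U2 hU1o hU2o hcover h1 h2
  obtain ⟨z, hz⟩ := hne
  exact eq_empty_iff_forall_notMem.1 hdisj z ⟨hz.1, hz.2⟩
end

section
/- The Čech–Stone remainder H* of the half-line admits a fixed-point free autohomeomorphism, namely the map f* induced by the translation x ↦ x+1 on H = [0,∞). -/
open Set

/-- The half-line `H = [0,∞)`. -/
abbrev Hplus : Type := {x : ℝ // 0 ≤ x}

/-- The translation `x ↦ x + 1` on the half-line. -/
def shiftMap : Hplus → Hplus := fun x => ⟨(x : ℝ) + 1, by have := x.2; linarith⟩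

lemma shiftMap_continuous : Continuous shiftMap :=
  (continuous_subtype_val.add continuous_const).subtype_mk _

/-- The Čech–Stone extension `βf : βH → βH` of the translation `f(x) = x + 1`. -/
noncomputable def betaShift : StoneCech Hplus → StoneCech Hplus :=
  stoneCechExtend (continuous_stoneCechUnit.comp shiftMap_continuous)

/-- The Čech–Stone remainder `H* = βH \ H`. -/
def HplusStar : Set (StoneCech Hplus) :=
  (Set.range (stoneCechUnit : Hplus → StoneCech Hplus))ᶜ

/-! With `f x = x + 1` and `g x = max (x - 1) 0` we have `g ∘ f = id`, and `f ∘ g = id` off the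
compact set `[0, 1]`. The image of `[0, 1]` in `βH` is compact, hence closed, so `H*` lies in the
closure of the image of `(1, ∞)`, where `βf ∘ βg = id`; thus `βg` restricts to an inverse of
`f*`. The map `x ↦ x mod 2` to the circle `ℝ/2ℤ` semiconjugates `f` to the rotation by `1`; its
extension to `βH` semiconjugates `βf` to that rotation, which has no fixed points. -/

namespace StoneCech

variable {X Y : Type*} [TopologicalSpace X] [TopologicalSpace Y]

noncomputable def map {f : X → Y} (hf : Continuous f) : StoneCech X → StoneCech Y :=
  stoneCechExtend (continuous_stoneCechUnit.comp hf)

section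

variable {f : X → Y} (hf : Continuous f) {g : Y → X} (hg : Continuous g)

@[simp]
lemma map_stoneCechUnit (x : X) : map hf (stoneCechUnit x) = stoneCechUnit (f x) :=
  stoneCechExtend_stoneCechUnit _ x

lemma continuous_map : Continuous (map hf) :=
  continuous_stoneCechExtend _

lemma leftInverse_map (hgf : Function.LeftInverse g f) :
    Function.LeftInverse (map hg) (map hf) :=
  congrFun <| stoneCech_hom_ext ((continuous_map hg).comp (continuous_map hf)) continuous_id <|
    funext fun x => by simp [hgf x]

lemma eqOn_map_comp_map_closure {s : Set Y} (hfg : EqOn (f ∘ g) id s) :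
    EqOn (map hf ∘ map hg) id (closure (stoneCechUnit '' s)) := by
  refine EqOn.closure ?_ ((continuous_map hf).comp (continuous_map hg)) continuous_id
  rintro _ ⟨y, hy, rfl⟩
  simp [show f (g y) = y from hfg hy]

lemma compl_range_stoneCechUnit_subset_closure_image_compl {K : Set X} (hK : IsCompact K) :
    (range (stoneCechUnit : X → StoneCech X))ᶜ ⊆ closure (stoneCechUnit '' Kᶜ) := by
  intro p hp
  have hKclosed : IsClosed (stoneCechUnit '' K) :=
    (hK.image continuous_stoneCechUnit).isClosed
  have hcover : closure (stoneCechUnit '' K) ∪ closure (stoneCechUnit '' Kᶜ) = univ := by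
    rw [← closure_union, ← image_union, union_compl_self, image_univ,
      denseRange_stoneCechUnit.closure_range]
  rcases (hcover ▸ mem_univ p : p ∈ _ ∪ _) with hpK | hpKc
  · rw [hKclosed.closure_eq] at hpK
    exact absurd (image_subset_range _ _ hpK) hp
  · exact hpKc

include hg in
lemma map_mem_remainder (hgf : Function.LeftInverse g f) {p : StoneCech X}
    (hp : p ∉ range stoneCechUnit) : map hf p ∉ range stoneCechUnit := by
  rintro ⟨y, hy⟩
  exact hp ⟨g y, by rw [← map_stoneCechUnit hg, hy, leftInverse_map hf hg hgf]⟩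

include hg in
lemma map_mem_remainder_of_eqOn {K : Set X} (hK : IsCompact K) (hgf : EqOn (g ∘ f) id Kᶜ)
    {p : StoneCech X} (hp : p ∉ range stoneCechUnit) : map hf p ∉ range stoneCechUnit := by
  rintro ⟨y, hy⟩
  refine hp ⟨g y, ?_⟩
  rw [← map_stoneCechUnit hg, hy]
  exact eqOn_map_comp_map_closure hg hf hgf
    (compl_range_stoneCechUnit_subset_closure_image_compl hK hp)

end

noncomputable def remainderHomeomorph {f : X → Y} (hf : Continuous f) {g : Y → X}
    (hg : Continuous g) (hgf : Function.LeftInverse g f) {K : Set Y} (hK : IsCompact K)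
    (hfg : EqOn (f ∘ g) id Kᶜ) :
    ↥(range (stoneCechUnit : X → StoneCech X))ᶜ ≃ₜ
      ↥(range (stoneCechUnit : Y → StoneCech Y))ᶜ where
  toFun p := ⟨map hf p, map_mem_remainder hf hg hgf p.2⟩
  invFun p := ⟨map hg p, map_mem_remainder_of_eqOn hg hf hK hfg p.2⟩
  left_inv p := Subtype.ext (leftInverse_map hf hg hgf p)
  right_inv p := Subtype.ext <| eqOn_map_comp_map_closure hf hg hfg
    (compl_range_stoneCechUnit_subset_closure_image_compl hK p.2)
  continuous_toFun := ((continuous_map hf).comp continuous_subtype_val).subtype_mk _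
  continuous_invFun := ((continuous_map hg).comp continuous_subtype_val).subtype_mk _

lemma semiconj_stoneCechExtend_map {Z : Type*} [TopologicalSpace Z] [CompactSpace Z] [T2Space Z]
    {f : X → X} (hf : Continuous f) {φ : X → Z} (hφ : Continuous φ) {r : Z → Z}
    (hr : Continuous r) (hsemi : Function.Semiconj φ f r) :
    Function.Semiconj (stoneCechExtend hφ) (map hf) r :=
  congrFun <| stoneCech_hom_ext ((continuous_stoneCechExtend hφ).comp (continuous_map hf))
    (hr.comp (continuous_stoneCechExtend hφ)) <| funext fun x => by simp [hsemi x]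

end StoneCech

lemma AddCircle.add_coe_ne_self {𝕜 : Type*} [AddCommGroup 𝕜] [LinearOrder 𝕜]
    [IsOrderedAddMonoid 𝕜] {p x : 𝕜} (hx : 0 < x) (hxp : x < p) (z : AddCircle p) :
    z + (x : AddCircle p) ≠ z := by
  rw [Ne, add_eq_left, AddCircle.coe_eq_zero_of_pos_iff p (hx.trans hxp) hx]
  rintro ⟨_ | n, hn⟩
  · exact hx.ne (by simpa using hn)
  · have : p ≤ (n + 1) • p := by
      rw [succ_nsmul]
      exact le_add_of_nonneg_left (nsmul_nonneg (hx.trans hxp).le n)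
    exact (hn ▸ this).not_gt hxp

def shiftInv : Hplus → Hplus := fun x => ⟨max ((x : ℝ) - 1) 0, le_max_right _ _⟩

lemma continuous_shiftInv : Continuous shiftInv :=
  ((continuous_subtype_val.sub continuous_const).max continuous_const).subtype_mk _

lemma shiftInv_shiftMap : Function.LeftInverse shiftInv shiftMap := fun x =>
  Subtype.ext <| by simp [shiftInv, shiftMap, x.2]

lemma eqOn_shiftMap_comp_shiftInv :
    EqOn (shiftMap ∘ shiftInv) id {x : Hplus | (x : ℝ) ≤ 1}ᶜ :=
  fun x hx => Subtype.ext <| by simp [shiftInv, shiftMap, (not_le.1 (notMem_ofPred_iff.1 hx)).le]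

lemma isCompact_le_one : IsCompact {x : Hplus | (x : ℝ) ≤ 1} := by
  have : IsCompact ((Subtype.val : Hplus → ℝ) ⁻¹' Icc 0 1) :=
    (Topology.IsClosedEmbedding.subtypeVal isClosed_Ici).isCompact_preimage isCompact_Icc
  convert this using 1
  ext x
  simp [x.2]

lemma semiconj_toAddCircle_shiftMap :
    Function.Semiconj (fun x : Hplus => ((x : ℝ) : AddCircle (2 : ℝ))) shiftMap
      (· + ((1 : ℝ) : AddCircle (2 : ℝ))) :=
  fun x => AddCircle.coe_add 2 (x : ℝ) 1

theorem betaShift_ne_self (p : StoneCech Hplus) : betaShift p ≠ p := by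
  have : Fact ((0 : ℝ) < 2) := ⟨two_pos⟩
  intro hfix
  have hsemi := StoneCech.semiconj_stoneCechExtend_map shiftMap_continuous
    ((AddCircle.continuous_mk' (2 : ℝ)).comp continuous_subtype_val)
    (continuous_add_const _) semiconj_toAddCircle_shiftMap
  exact AddCircle.add_coe_ne_self one_pos one_lt_two _ (Function.IsFixedPt.map hfix hsemi)

/-- The remainder `H*` admits a fixed-point free autohomeomorphism, namely the map `f*`
induced by the translation `x ↦ x + 1`. -/
theorem stmt5 :
    ∃ h : HplusStar ≃ₜ HplusStar,
      (∀ x : HplusStar, h x ≠ x) ∧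
      (∀ x : HplusStar, (h x : StoneCech Hplus) = betaShift x) := by
  refine ⟨StoneCech.remainderHomeomorph shiftMap_continuous continuous_shiftInv
    shiftInv_shiftMap isCompact_le_one eqOn_shiftMap_comp_shiftInv,
    fun x hx => betaShift_ne_self x (congrArg Subtype.val hx), fun x => rfl⟩
end

section
/- Let U_i = ⋃_{n ∈ ℕ} (8n + 2i, 8n + 2i + 3) for i = 0,1,2,3, open subsets of H = [0,∞). Then U_0 ∪ U_1 ∪ U_2 ∪ U_3 ⊇ [1,∞), U_0 ∩ U_2 = ∅ and U_1 ∩ U_3 = ∅, while U_0 ∩ U_1, U_1 ∩ U_2, U_2 ∩ U_3, U_3 ∩ U_0 are all unbounded. -/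
open Set

/-- The open sets `U i = ⋃ₙ (8n + 2i, 8n + 2i + 3)` on the half-line. -/
def Upiece (i : Fin 4) : Set ℝ :=
  ⋃ n : ℕ, Ioo (8 * (n : ℝ) + 2 * (i : ℝ)) (8 * (n : ℝ) + 2 * (i : ℝ) + 3)

lemma mem_Upiece {i : Fin 4} {x : ℝ} :
    x ∈ Upiece i ↔ ∃ n : ℕ, 8 * (n : ℝ) + 2 * (i : ℝ) < x ∧ x < 8 * (n : ℝ) + 2 * (i : ℝ) + 3 := by
  simp [Upiece, mem_iUnion, mem_Ioo]

/-- The four sets `U 0, U 1, U 2, U 3` cover `[1,∞)`, opposite ones are disjoint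
(`U 0 ∩ U 2 = ∅`, `U 1 ∩ U 3 = ∅`), and the cyclically adjacent intersections
`U 0 ∩ U 1`, `U 1 ∩ U 2`, `U 2 ∩ U 3` and `U 3 ∩ U 0` are all unbounded. -/
theorem stmt11 :
    Ici (1 : ℝ) ⊆ Upiece 0 ∪ Upiece 1 ∪ Upiece 2 ∪ Upiece 3 ∧
    Upiece 0 ∩ Upiece 2 = ∅ ∧
    Upiece 1 ∩ Upiece 3 = ∅ ∧
    (∀ t : ℝ, ∃ x ∈ Upiece 0 ∩ Upiece 1, t < x) ∧
    (∀ t : ℝ, ∃ x ∈ Upiece 1 ∩ Upiece 2, t < x) ∧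
    (∀ t : ℝ, ∃ x ∈ Upiece 2 ∩ Upiece 3, t < x) ∧
    (∀ t : ℝ, ∃ x ∈ Upiece 3 ∩ Upiece 0, t < x) := by
  have c0 : ((0 : Fin 4) : ℝ) = 0 := by norm_num
  have c1 : ((1 : Fin 4) : ℝ) = 1 := by norm_num
  have c2 : ((2 : Fin 4) : ℝ) = 2 := by norm_num
  have c3 : ((3 : Fin 4) : ℝ) = 3 := by norm_num [show ((3 : Fin 4) : ℕ) = 3 from rfl]
  refine ⟨?_, ?_, ?_, ?_, ?_, ?_, ?_⟩
  · -- cover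
    intro x hx
    simp only [mem_Ici] at hx
    obtain ⟨n, hn⟩ : ∃ n : ℕ, (n : ℝ) = ⌊x / 8⌋ := by
      refine ⟨⌊x / 8⌋.toNat, ?_⟩
      have hnn : (0 : ℤ) ≤ ⌊x / 8⌋ := Int.le_floor.mpr (by norm_num; linarith)
      exact_mod_cast Int.toNat_of_nonneg hnn
    have h1 : 8 * (n : ℝ) ≤ x := by
      have := Int.floor_le (x / 8)
      rw [← hn] at this; linarith
    have h2 : x < 8 * (n : ℝ) + 8 := by
      have := Int.lt_floor_add_one (x / 8)
      rw [← hn] at this; linarith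
    simp only [mem_union, mem_Upiece, c0, c1, c2, c3]
    rcases eq_or_lt_of_le h1 with heq | hlt
    · -- x = 8n, n ≥ 1, use i = 3 with n - 1
      have hn1 : 1 ≤ n := by
        by_contra h
        push_neg at h
        interval_cases n
        simp at heq; linarith
      refine Or.inr ⟨n - 1, ?_, ?_⟩ <;>
      · have : ((n - 1 : ℕ) : ℝ) = (n : ℝ) - 1 := by
          push_cast [Nat.cast_sub hn1]; ring
        rw [this]; linarith
    · rcases lt_or_ge x (8 * (n : ℝ) + 3) with h3 | h3
      · exact Or.inl (Or.inl (Or.inl ⟨n, by linarith, by linarith⟩))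
      · rcases lt_or_ge x (8 * (n : ℝ) + 5) with h5 | h5
        · exact Or.inl (Or.inl (Or.inr ⟨n, by linarith, by linarith⟩))
        · rcases lt_or_ge x (8 * (n : ℝ) + 7) with h7 | h7
          · exact Or.inl (Or.inr ⟨n, by linarith, by linarith⟩)
          · exact Or.inr ⟨n, by linarith, by linarith⟩
  · -- U0 ∩ U2 = ∅
    ext x
    simp only [mem_inter_iff, mem_Upiece, c0, c2, mem_empty_iff_false, iff_false]
    rintro ⟨⟨n, hn1, hn2⟩, ⟨m, hm1, hm2⟩⟩
    have hmn : (m : ℝ) + 1 ≤ n := by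
      have : m < n := by
        by_contra h
        push_neg at h
        have : (n : ℝ) ≤ m := by exact_mod_cast h
        linarith
      exact_mod_cast this
    linarith
  · -- U1 ∩ U3 = ∅
    ext x
    simp only [mem_inter_iff, mem_Upiece, c1, c3, mem_empty_iff_false, iff_false]
    rintro ⟨⟨n, hn1, hn2⟩, ⟨m, hm1, hm2⟩⟩
    have hmn : (m : ℝ) + 1 ≤ n := by
      have : m < n := by
        by_contra h
        push_neg at h
        have : (n : ℝ) ≤ m := by exact_mod_cast h
        linarith
      exact_mod_cast this
    linarith
  all_goals {
    intro t
    obtain ⟨n, hn⟩ := exists_nat_gt t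
    first
    | exact ⟨8 * n + 5/2, ⟨mem_Upiece.mpr ⟨n, by rw [c0]; push_cast; constructor <;> linarith⟩,
        mem_Upiece.mpr ⟨n, by rw [c1]; push_cast; constructor <;> linarith⟩⟩,
        by push_cast; linarith [Nat.cast_nonneg (α := ℝ) n]⟩
    | exact ⟨8 * n + 9/2, ⟨mem_Upiece.mpr ⟨n, by rw [c1]; push_cast; constructor <;> linarith⟩,
        mem_Upiece.mpr ⟨n, by rw [c2]; push_cast; constructor <;> linarith⟩⟩,
        by push_cast; linarith [Nat.cast_nonneg (α := ℝ) n]⟩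
    | exact ⟨8 * n + 13/2, ⟨mem_Upiece.mpr ⟨n, by rw [c2]; push_cast; constructor <;> linarith⟩,
        mem_Upiece.mpr ⟨n, by rw [c3]; push_cast; constructor <;> linarith⟩⟩,
        by push_cast; linarith [Nat.cast_nonneg (α := ℝ) n]⟩
    | exact ⟨8 * n + 17/2, ⟨mem_Upiece.mpr ⟨n, by rw [c3]; push_cast; constructor <;> linarith⟩,
        mem_Upiece.mpr ⟨n + 1, by rw [c0]; push_cast; constructor <;> linarith⟩⟩,
        by push_cast; linarith [Nat.cast_nonneg (α := ℝ) n]⟩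
  }
end

section
/- Let a_m = (a_{m,n})_n and b_α be elements of [0,1]^ℕ, u a free ultrafilter on ℕ, and f : ℕ → R where R is the set of finite unions of closed rational intervals in [0,1]. In the ultrapower setting, the set A_f = ⋃_n {n} × f(n) satisfies: cl_{βM}(A_f) ∩ [a_m, b_α] = ⋂_{U ∈ u} cl(⋃_{n ∈ U} {n} × (f(n) ∩ [a_{m,n}, b_{α,n}])). Consequently, cl(A_f) ∩ [a_m, b_α] = ∅ iff {n : f(n) ∩ [a_{m,n}, b_{α,n}] = ∅} ∈ u. -/
open Set Filter Topology

/-!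
In a normal space `X`, closures in `βX` of closed sets intersect exactly as the sets do: disjoint
closed sets are separated by an Urysohn function, whose extension to `βX` separates their closures,
and a point of `cl A ∩ cl B` outside `cl (A ∩ B)` would, after cutting `A` and `B` down by a closed
neighbourhood of it, contradict this. Applied to `A_f` and to `⋃_{n ∈ U} {n} × [aₙ, bₙ]` for each
`U ∈ u` this gives the identity. For the emptiness criterion, if `{n | f n ∩ [aₙ, bₙ] ≠ ∅} ∈ u`
then the closed sets `cl(⋃_{n ∈ U} {n} × (f n ∩ [aₙ, bₙ]))`, `U ∈ u`, are nonempty and directed,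
so they meet by compactness of `βM`.
-/

section

variable {X : Type*} [TopologicalSpace X] [NormalSpace X]

theorem disjoint_closure_image_stoneCechUnit {A B : Set X} (hA : IsClosed A) (hB : IsClosed B)
    (hAB : Disjoint A B) :
    Disjoint (closure (stoneCechUnit '' A)) (closure (stoneCechUnit '' B)) := by
  obtain ⟨g, hg0, hg1, hg01⟩ := exists_continuous_zero_one_of_isClosed hA hB hAB
  have hg : Continuous fun x ↦ (⟨g x, hg01 x⟩ : unitInterval) := g.continuous.subtype_mk _
  have closure_subset_fiber (C : Set X) (c : unitInterval) (hC : ∀ x ∈ C, g x = c) :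
      closure (stoneCechUnit '' C) ⊆ stoneCechExtend hg ⁻¹' {c} := by
    refine closure_minimal ?_ (isClosed_singleton.preimage (continuous_stoneCechExtend hg))
    rintro _ ⟨x, hx, rfl⟩
    exact (stoneCechExtend_stoneCechUnit hg x).trans (Subtype.ext (hC x hx))
  exact ((disjoint_singleton.2 zero_ne_one).preimage _).mono
    (closure_subset_fiber A 0 fun x hx ↦ hg0 hx) (closure_subset_fiber B 1 fun x hx ↦ hg1 hx)

theorem closure_image_stoneCechUnit_inter {A B : Set X} (hA : IsClosed A) (hB : IsClosed B) :
    closure (stoneCechUnit '' A) ∩ closure (stoneCechUnit '' B)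
      = closure (stoneCechUnit '' (A ∩ B)) := by
  refine Subset.antisymm (fun x hx ↦ ?_)
    (closure_inter_subset.trans' (closure_mono (image_inter_subset _ _ _)))
  by_contra hxAB
  obtain ⟨K, hKx, hK, hKAB⟩ :=
    exists_mem_nhds_isClosed_subset (isClosed_closure.isOpen_compl.mem_nhds hxAB)
  have restrict (C : Set X) (hxC : x ∈ closure (stoneCechUnit '' C)) :
      x ∈ closure (stoneCechUnit '' (C ∩ stoneCechUnit ⁻¹' K)) := by
    rw [image_inter_preimage, mem_closure_iff_nhds]
    intro t ht
    simpa only [inter_assoc, inter_comm K] using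
      mem_closure_iff_nhds.1 hxC (t ∩ K) (inter_mem ht hKx)
  have hKdisj : Disjoint (A ∩ stoneCechUnit ⁻¹' K) (B ∩ stoneCechUnit ⁻¹' K) := by
    refine disjoint_left.2 fun p ⟨hpA, hpK⟩ ⟨hpB, _⟩ ↦ hKAB hpK ?_
    exact subset_closure (mem_image_of_mem _ ⟨hpA, hpB⟩)
  have hKc : IsClosed (stoneCechUnit ⁻¹' K) := hK.preimage continuous_stoneCechUnit
  exact disjoint_left.1 (disjoint_closure_image_stoneCechUnit (hA.inter hKc) (hB.inter hKc) hKdisj)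
    (restrict A hx.1) (restrict B hx.2)

end

section

variable {ι Y : Type*} [TopologicalSpace ι] [TopologicalSpace Y]

/-- For `s n = [aₙ, bₙ]` this is the interval `[a, b]` of `I_u`. -/
def stoneCechLimit (u : Filter ι) (s : ι → Set Y) : Set (StoneCech (ι × Y)) :=
  ⋂ U ∈ u, closure (stoneCechUnit '' {p : ι × Y | p.1 ∈ U ∧ p.2 ∈ s p.1})

theorem stoneCechLimit_eq_empty_iff (u : Ultrafilter ι) (s : ι → Set Y) :
    stoneCechLimit u s = ∅ ↔ {i | s i = ∅} ∈ u := by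
  refine ⟨fun h ↦ ?_, fun h ↦ eq_empty_of_subset_empty ?_⟩
  · by_contra hnot
    have hne (U : {U : Set ι // U ∈ u}) :
        (closure (stoneCechUnit '' {p : ι × Y | p.1 ∈ U.1 ∧ p.2 ∈ s p.1})).Nonempty := by
      obtain ⟨i, hiU, hi⟩ :=
        Filter.nonempty_of_mem (inter_mem U.2 (Ultrafilter.compl_mem_iff_notMem.2 hnot))
      obtain ⟨y, hy⟩ := nonempty_iff_ne_empty.2 hi
      exact ⟨_, subset_closure (mem_image_of_mem _ (show (i, y) ∈ _ from ⟨hiU, hy⟩))⟩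
    have hdir : Directed (· ⊇ ·) fun U : {U : Set ι // U ∈ u} ↦
        closure (stoneCechUnit '' {p : ι × Y | p.1 ∈ U.1 ∧ p.2 ∈ s p.1}) :=
      fun U V ↦ ⟨⟨U.1 ∩ V.1, inter_mem U.2 V.2⟩,
        closure_mono (image_mono fun p hp ↦ ⟨hp.1.1, hp.2⟩),
        closure_mono (image_mono fun p hp ↦ ⟨hp.1.2, hp.2⟩)⟩
    have : Nonempty {U : Set ι // U ∈ u} := ⟨⟨univ, univ_mem⟩⟩
    obtain ⟨x, hx⟩ := IsCompact.nonempty_iInter_of_directed_nonempty_isCompact_isClosed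
      _ hdir hne (fun _ ↦ isClosed_closure.isCompact) fun _ ↦ isClosed_closure
    exact h.subset (mem_iInter₂.2 fun U hU ↦ mem_iInter.1 hx ⟨U, hU⟩)
  · refine (iInter₂_subset _ h).trans (closure_minimal ?_ isClosed_empty)
    rintro _ ⟨p, ⟨hp, hps⟩, rfl⟩
    exact (eq_empty_iff_forall_notMem.1 hp) _ hps

theorem isClosed_setOf_snd_mem [DiscreteTopology ι] {s : ι → Set Y} (hs : ∀ i, IsClosed (s i)) :
    IsClosed {p : ι × Y | p.2 ∈ s p.1} := by
  rw [← isOpen_compl_iff, isOpen_iff_mem_nhds]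
  rintro ⟨i, y⟩ hy
  rw [nhds_prod_eq, nhds_discrete, pure_prod]
  exact (hs i).isOpen_compl.mem_nhds hy

theorem isClosed_setOf_fst_mem_and_snd_mem [DiscreteTopology ι] (U : Set ι) {s : ι → Set Y}
    (hs : ∀ i, IsClosed (s i)) : IsClosed {p : ι × Y | p.1 ∈ U ∧ p.2 ∈ s p.1} :=
  ((isClosed_discrete U).preimage continuous_fst).inter (isClosed_setOf_snd_mem hs)

theorem closure_image_stoneCechUnit_inter_stoneCechLimit [DiscreteTopology ι]
    [NormalSpace (ι × Y)] (u : Filter ι)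
    {s t : ι → Set Y} (hs : ∀ i, IsClosed (s i)) (ht : ∀ i, IsClosed (t i)) :
    closure (stoneCechUnit '' {p : ι × Y | p.2 ∈ s p.1}) ∩ stoneCechLimit u t
      = stoneCechLimit u fun i ↦ s i ∩ t i := by
  refine Subset.antisymm (fun x ⟨hxs, hxt⟩ ↦ mem_iInter₂.2 fun U hU ↦ ?_) fun x hx ↦ ⟨?_, ?_⟩
  · have hx : x ∈ closure (stoneCechUnit ''
        ({p : ι × Y | p.2 ∈ s p.1} ∩ {p | p.1 ∈ U ∧ p.2 ∈ t p.1})) := by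
      rw [← closure_image_stoneCechUnit_inter (isClosed_setOf_snd_mem hs)
        (isClosed_setOf_fst_mem_and_snd_mem U ht)]
      exact ⟨hxs, mem_iInter₂.1 hxt U hU⟩
    refine closure_mono (image_mono ?_) hx
    exact fun p ⟨hps, hpU, hpt⟩ ↦ ⟨hpU, hps, hpt⟩
  · refine closure_mono (image_mono ?_) (mem_iInter₂.1 hx univ univ_mem)
    exact fun p hp ↦ hp.2.1
  · refine mem_iInter₂.2 fun U hU ↦ closure_mono (image_mono ?_) (mem_iInter₂.1 hx U hU)
    exact fun p hp ↦ ⟨hp.1, hp.2.2⟩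

end

theorem stmt17_general (u : Ultrafilter ℕ)
    (a b : ℕ → unitInterval) (f : ℕ → Set unitInterval)
    (hf : ∀ n : ℕ, ∃ (k : ℕ) (q r : Fin k → ℚ),
      f n = ⋃ i : Fin k, {x : unitInterval | (q i : ℝ) ≤ (x : ℝ) ∧ (x : ℝ) ≤ (r i : ℝ)}) :
    (closure (stoneCechUnit '' {p : ℕ × unitInterval | p.2 ∈ f p.1}) ∩
        ⋂ (U : Set ℕ) (_ : U ∈ u),
          closure (stoneCechUnit ''
            {p : ℕ × unitInterval | p.1 ∈ U ∧ a p.1 ≤ p.2 ∧ p.2 ≤ b p.1}) =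
      ⋂ (U : Set ℕ) (_ : U ∈ u),
        closure (stoneCechUnit ''
          {p : ℕ × unitInterval | p.1 ∈ U ∧ p.2 ∈ f p.1 ∧ a p.1 ≤ p.2 ∧ p.2 ≤ b p.1})) ∧
    ((closure (stoneCechUnit '' {p : ℕ × unitInterval | p.2 ∈ f p.1}) ∩
        ⋂ (U : Set ℕ) (_ : U ∈ u),
          closure (stoneCechUnit ''
            {p : ℕ × unitInterval | p.1 ∈ U ∧ a p.1 ≤ p.2 ∧ p.2 ≤ b p.1}) = ∅) ↔
      {n : ℕ | f n ∩ Set.Icc (a n) (b n) = ∅} ∈ u) := by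
  have hfc (n : ℕ) : IsClosed (f n) := by
    obtain ⟨k, q, r, hn⟩ := hf n
    exact hn ▸ isClosed_iUnion_of_finite fun i ↦ isClosed_Icc.preimage continuous_subtype_val
  have key : closure (stoneCechUnit '' {p : ℕ × unitInterval | p.2 ∈ f p.1}) ∩
      stoneCechLimit (u : Filter ℕ) (fun n ↦ Icc (a n) (b n))
        = stoneCechLimit (u : Filter ℕ) fun n ↦ f n ∩ Icc (a n) (b n) :=
    closure_image_stoneCechUnit_inter_stoneCechLimit u hfc fun _ ↦ isClosed_Icc
  exact ⟨key, key ▸ stoneCechLimit_eq_empty_iff u _⟩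

/-- For `f : ℕ → R` (each `f n` a finite union of closed rational intervals in `[0,1]`),
the basic closed set `A_f = ⋃ₙ {n} × f(n)` in `M = ℕ × [0,1]` satisfies
`cl_{βM}(A_f) ∩ [a, b] = ⋂_{U ∈ u} cl(⋃_{n ∈ U} {n} × (f(n) ∩ [aₙ, bₙ]))`,
where `[a, b] = ⋂_{U ∈ u} cl(⋃_{n ∈ U} {n} × [aₙ, bₙ])` is the interval of `I_u`
determined by the sequences `a` and `b`.  Consequently
`cl(A_f) ∩ [a, b] = ∅` iff `{n | f(n) ∩ [aₙ, bₙ] = ∅} ∈ u`. -/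
theorem stmt17 (u : Ultrafilter ℕ) (hfree : ∀ a : ℕ, u ≠ pure a)
    (a b : ℕ → unitInterval) (f : ℕ → Set unitInterval)
    (hf : ∀ n : ℕ, ∃ (k : ℕ) (q r : Fin k → ℚ),
      f n = ⋃ i : Fin k, {x : unitInterval | (q i : ℝ) ≤ (x : ℝ) ∧ (x : ℝ) ≤ (r i : ℝ)}) :
    (closure (stoneCechUnit '' {p : ℕ × unitInterval | p.2 ∈ f p.1}) ∩
        ⋂ (U : Set ℕ) (_ : U ∈ u),
          closure (stoneCechUnit ''
            {p : ℕ × unitInterval | p.1 ∈ U ∧ a p.1 ≤ p.2 ∧ p.2 ≤ b p.1}) =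
      ⋂ (U : Set ℕ) (_ : U ∈ u),
        closure (stoneCechUnit ''
          {p : ℕ × unitInterval | p.1 ∈ U ∧ p.2 ∈ f p.1 ∧ a p.1 ≤ p.2 ∧ p.2 ≤ b p.1})) ∧
    ((closure (stoneCechUnit '' {p : ℕ × unitInterval | p.2 ∈ f p.1}) ∩
        ⋂ (U : Set ℕ) (_ : U ∈ u),
          closure (stoneCechUnit ''
            {p : ℕ × unitInterval | p.1 ∈ U ∧ a p.1 ≤ p.2 ∧ p.2 ≤ b p.1}) = ∅) ↔
      {n : ℕ | f n ∩ Set.Icc (a n) (b n) = ∅} ∈ u) :=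
  stmt17_general u a b f hf
end
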